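/- Every forward-propagating, temporally stratified temporal program (Temporal Datalog→⊖ program) admits an incremental stratification: there exists a temporal stratification whose strata are organized as blocks B⃗₁, B⃗₂, … indexed by time-points, such that for every t ≥ 1 all atoms in block B⃗ₜ have time-point t, and the induced sequence of predicate sets forms a global stratification of the program P_T obtained from P by deleting all body conditions whose time offset is strictly positive. -/

import Mathlib

/-- A Temporal Datalog→⊖-style rule: head at time `T`, body atoms `p(X, T − k)`
given by a predicate and an integer offset `k`. -/
structure TDRule (Pred : Type) where
  head : Pred
  pos : List (Pred × ℤ)
  neg : List (Pred × ℤ)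

/-- `P` is forward-propagating: every body time term `T − k` has `k ≥ 0`. -/
def ForwardProp {Pred : Type} (P : Set (TDRule Pred)) : Prop :=
  ∀ r ∈ P, (∀ pk ∈ r.pos, 0 ≤ pk.2) ∧ (∀ pk ∈ r.neg, 0 ≤ pk.2)

/-- `lam'` is a local stratification of the time abstraction of `P`
(i.e., `P` is temporally stratified via `lam'`). -/
def IsAbstractLocalStrat {Pred : Type} (P : Set (TDRule Pred)) (lam' : Pred × ℤ → ℕ) : Prop :=
  ∀ r ∈ P, ∀ t : ℤ,
    (∀ pk ∈ r.pos, lam' (pk.1, t - pk.2) ≤ lam' (r.head, t)) ∧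
    (∀ pk ∈ r.neg, lam' (pk.1, t - pk.2) < lam' (r.head, t))

/-- `σ` is a global stratification of `P_T`, the program obtained from `P` by deleting
all body conditions with strictly positive offset: positive offset-0 body predicates lie
in strata ≤ the head's, negated offset-0 body predicates strictly below. -/
def IsGlobalStratPT {Pred : Type} (P : Set (TDRule Pred)) (σ : Pred → ℕ) : Prop :=
  ∀ r ∈ P, (∀ pk ∈ r.pos, pk.2 = 0 → σ pk.1 ≤ σ r.head) ∧
           (∀ pk ∈ r.neg, pk.2 = 0 → σ pk.1 < σ r.head)

/-- `lam` (valued in time-indexed blocks ordered lexicographically) is a temporal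
stratification of `P`. -/
def IsTemporalStratLex {Pred : Type} (P : Set (TDRule Pred)) (lam : Pred × ℤ → ℤ ×ₗ ℕ) : Prop :=
  ∀ r ∈ P, ∀ t : ℤ,
    (∀ pk ∈ r.pos, lam (pk.1, t - pk.2) ≤ lam (r.head, t)) ∧
    (∀ pk ∈ r.neg, lam (pk.1, t - pk.2) < lam (r.head, t))

/-!
A stratification `lam'` of the time abstraction, read at a single time-point `t`, respects all
offset-`0` conditions, so `p ↦ lam' (p, t)` stratifies `P_T`. Placing `(p, t)` at `(t, σ p)` in
lexicographic order then stratifies `P`: forward propagation puts every body atom of positive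
offset in an earlier block, and offset-`0` atoms share the head's block, where `σ` orders them.
-/

theorem IsAbstractLocalStrat.isGlobalStratPT {Pred : Type} {P : Set (TDRule Pred)}
    {lam' : Pred × ℤ → ℕ} (h : IsAbstractLocalStrat P lam') (t : ℤ) :
    IsGlobalStratPT P (fun p => lam' (p, t)) := by
  intro r hr
  obtain ⟨hpos, hneg⟩ := h r hr t
  exact ⟨fun pk hpk hk => by simpa [hk] using hpos pk hpk,
    fun pk hpk hk => by simpa [hk] using hneg pk hpk⟩

theorem IsGlobalStratPT.isTemporalStratLex {Pred : Type} {P : Set (TDRule Pred)}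
    {σ : Pred → ℕ} (hσ : IsGlobalStratPT P σ) (hfp : ForwardProp P) :
    IsTemporalStratLex P (fun pt => toLex ((pt.2, σ pt.1) : ℤ × ℕ)) := by
  intro r hr t
  obtain ⟨hpos, hneg⟩ := hσ r hr
  obtain ⟨hfpos, hfneg⟩ := hfp r hr
  exact ⟨fun pk hpk => Prod.Lex.toLex_le_toLex'.2
      ⟨sub_le_self t (hfpos pk hpk), fun ht => hpos pk hpk (sub_eq_self.1 ht)⟩,
    fun pk hpk => Prod.Lex.toLex_lt_toLex'.2
      ⟨sub_le_self t (hfneg pk hpk), fun ht => hneg pk hpk (sub_eq_self.1 ht)⟩⟩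

/-- Every forward-propagating, temporally stratified temporal program admits an incremental
stratification: there is a global stratification `σ` of `P_T` such that the assignment placing
atom `(p, t)` in block `t`, position `σ p` (blocks ordered lexicographically by time, then by
predicate stratum) is a temporal stratification of `P`, and every atom placed in a block of
time-point `t` indeed has time-point `t`. -/
theorem incremental_stratification_exists (Pred : Type) (P : Set (TDRule Pred))
    (hfp : ForwardProp P)
    (hts : ∃ lam' : Pred × ℤ → ℕ, IsAbstractLocalStrat P lam') :
    ∃ σ : Pred → ℕ, IsGlobalStratPT P σ ∧
      IsTemporalStratLex P (fun pt => toLex ((pt.2, σ pt.1) : ℤ × ℕ)) ∧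
      (∀ (p : Pred) (t : ℤ), (ofLex ((fun pt : Pred × ℤ => toLex ((pt.2, σ pt.1) : ℤ × ℕ)) (p, t))).1 = t) := by
  obtain ⟨lam', hlam'⟩ := hts
  have hσ := hlam'.isGlobalStratPT 0
  exact ⟨_, hσ, hσ.isTemporalStratLex hfp, fun _ _ => rfl⟩
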